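/- Let S and A be nonempty finite sets, r : S×A → ℝ, γ ∈ (0,1), P a transition kernel, τ > 0, α ∈ ℝ, and q_k : S×A → ℝ. Let π_{k+1} = softmax(q_k/τ) and define lse_k(s) = τ·ln(∑_{a} exp(q_k(s,a)/τ)). Then, pointwise on S×A: r + ατ·ln π_{k+1} + γ·P⟨π_{k+1}, q_k − τ·ln π_{k+1}⟩ = r + γ·P(lse_k) + α·(q_k − P̃lse_k), where P̃lse_k(s,a) := lse_k(s); that is, the Munchausen evaluation update equals the Conservative Value Iteration-type update r(s,a) + γ·∑_{s'} P(s,a)(s')·lse_k(s') + α·(q_k(s,a) − lse_k(s)). -/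

import Mathlib

/-!
With `π = softmax(q/τ)` one has `τ ln π(s,a) = q(s,a) - lse(s)`. This turns the Munchausen bonus
`ατ ln π` into `α (q - lse)`, and, since `π(s)` sums to one, it makes the entropy-regularised
value `⟨π, q - τ ln π⟩(s)` equal to `lse(s)`.
-/

open Real Finset

section Softmax

variable {ι : Type*} [Fintype ι]

noncomputable def softmax (τ : ℝ) (f : ι → ℝ) (i : ι) : ℝ :=
  exp (f i / τ) / ∑ j, exp (f j / τ)

noncomputable def logSumExp (τ : ℝ) (f : ι → ℝ) : ℝ :=
  τ * log (∑ j, exp (f j / τ))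

lemma sum_exp_div_pos [Nonempty ι] (τ : ℝ) (f : ι → ℝ) : 0 < ∑ j, exp (f j / τ) :=
  sum_pos (fun _ _ => exp_pos _) univ_nonempty

lemma sum_softmax [Nonempty ι] (τ : ℝ) (f : ι → ℝ) : ∑ i, softmax τ f i = 1 := by
  simp only [softmax]
  rw [← sum_div, div_self (sum_exp_div_pos τ f).ne']

lemma mul_log_softmax {τ : ℝ} (hτ : τ ≠ 0) (f : ι → ℝ) (i : ι) :
    τ * log (softmax τ f i) = f i - logSumExp τ f := by
  have : Nonempty ι := ⟨i⟩
  rw [softmax, logSumExp, log_div (exp_ne_zero _) (sum_exp_div_pos τ f).ne', log_exp]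
  field_simp

lemma sum_softmax_mul_sub_mul_log_softmax [Nonempty ι] {τ : ℝ} (hτ : τ ≠ 0) (f : ι → ℝ) :
    ∑ i, softmax τ f i * (f i - τ * log (softmax τ f i)) = logSumExp τ f := by
  simp only [mul_log_softmax hτ, sub_sub_cancel, ← sum_mul, sum_softmax, one_mul]

end Softmax

theorem stmt_10_general {S A : Type*} [Fintype S] [Fintype A]
    (r : S × A → ℝ) (γ : ℝ)
    (P : S × A → S → ℝ)
    (τ : ℝ) (hτ : 0 < τ) (α : ℝ) (qk : S × A → ℝ)
    (πk1 : S → A → ℝ)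
    (hπk1 : ∀ s a, πk1 s a = Real.exp (qk (s, a) / τ) / ∑ a', Real.exp (qk (s, a') / τ))
    (lse : S → ℝ) (hlse : ∀ s, lse s = τ * Real.log (∑ a, Real.exp (qk (s, a) / τ))) :
    ∀ s a,
      r (s, a) + α * τ * Real.log (πk1 s a)
        + γ * ∑ s', P (s, a) s' *
            (∑ a', πk1 s' a' * (qk (s', a') - τ * Real.log (πk1 s' a')))
      = r (s, a) + γ * (∑ s', P (s, a) s' * lse s') + α * (qk (s, a) - lse s) := by
  intro s a
  have : Nonempty A := ⟨a⟩
  obtain rfl : πk1 = fun s => softmax τ fun a => qk (s, a) :=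
    funext fun s => funext (hπk1 s)
  obtain rfl : lse = fun s => logSumExp τ fun a => qk (s, a) :=
    funext hlse
  simp only [sum_softmax_mul_sub_mul_log_softmax hτ.ne']
  rw [mul_assoc α τ, mul_log_softmax hτ.ne']
  ring

/-- Equation (5): with `π_{k+1} = softmax(q_k/τ)` and
`lse_k(s) = τ ln ∑ₐ exp(q_k(s,a)/τ)`, the Munchausen evaluation update equals the
Conservative Value Iteration-type update
`r(s,a) + γ ∑_{s'} P(s,a)(s') lse_k(s') + α (q_k(s,a) − lse_k(s))`, pointwise on `S × A`. -/
theorem stmt_10 {S A : Type*} [Fintype S] [Fintype A] [Nonempty S] [Nonempty A]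
    (r : S × A → ℝ) (γ : ℝ) (hγ : γ ∈ Set.Ioo (0 : ℝ) 1)
    (P : S × A → S → ℝ) (hP0 : ∀ sa s', 0 ≤ P sa s') (hP1 : ∀ sa, ∑ s', P sa s' = 1)
    (τ : ℝ) (hτ : 0 < τ) (α : ℝ) (qk : S × A → ℝ)
    (πk1 : S → A → ℝ)
    (hπk1 : ∀ s a, πk1 s a = Real.exp (qk (s, a) / τ) / ∑ a', Real.exp (qk (s, a') / τ))
    (lse : S → ℝ) (hlse : ∀ s, lse s = τ * Real.log (∑ a, Real.exp (qk (s, a) / τ))) :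
    ∀ s a,
      r (s, a) + α * τ * Real.log (πk1 s a)
        + γ * ∑ s', P (s, a) s' *
            (∑ a', πk1 s' a' * (qk (s', a') - τ * Real.log (πk1 s' a')))
      = r (s, a) + γ * (∑ s', P (s, a) s' * lse s') + α * (qk (s, a) - lse s) :=
  stmt_10_general r γ P τ hτ α qk πk1 hπk1 lse hlse
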